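/- Let π, the presentation complex C₂ → C₁ → C₀, α and γ be as above, and let s = Π_{k=1}^c w_k ρ_{j_k}^{ε_k} w_k⁻¹ be an identity of the presentation: w_k ∈ F, ε_k = ±1, and the image of s under the homomorphism ψ: P ∗ F → F with ψ(ρ_j) = r_j and ψ(g_i) = g_i is the trivial element of F. Let C₃ have a basis element h³ with ∂₃(h³) = Σ_{k=1}^c ε_k w̄_k h²_{j_k} ∈ C₂, where w̄_k is the image of w_k in ℤ[π]. Define Δ₀(h³) = h⁰⊗h³ + h³⊗h⁰ + Σ_{k=1}^c ε_k (α(w_k) ⊗ w_k h²_{j_k} + w_k h²_{j_k} ⊗ α(w_k)) + Σ_{k=1}^c δ_k w_k·(h²_{j_k} ⊗ α(r_{j_k})) − Σ_{1 ≤ l < k ≤ c} ε_l w_l h²_{j_l} ⊗ ε_k w_k α(r_{j_k}), where δ_k = (ε_k − 1)/2 and · denotes the diagonal action. Then together with Trotter's formulae for Δ₀ in degrees ≤ 2, the chain map condition holds in degree 3: ∂_⊗(Δ₀(h³)) = Δ₀(∂₃(h³)). -/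

import Mathlib

open scoped TensorProduct

namespace stmt8

variable {π : Type*} [Group π]

/-- The action of `g ∈ π` on a left `ℤ[π]`-module, as a `ℤ`-linear map. -/
noncomputable def actL (M : Type*) [AddCommGroup M] [Module (MonoidAlgebra ℤ π) M]
    (g : π) : M →ₗ[ℤ] M :=
  (DistribMulAction.toAddMonoidHom M
    ((MonoidAlgebra.of ℤ π g) : MonoidAlgebra ℤ π)).toIntLinearMap

/-- The representation of `π` underlying a left `ℤ[π]`-module. -/
noncomputable def repOf (M : Type*) [AddCommGroup M] [Module (MonoidAlgebra ℤ π) M] :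
    Representation ℤ π M where
  toFun := actL M
  map_one' := by
    ext x
    change (MonoidAlgebra.of ℤ π 1 : MonoidAlgebra ℤ π) • x = x
    rw [map_one, one_smul]
  map_mul' g h := by
    ext x
    change (MonoidAlgebra.of ℤ π (g * h) : MonoidAlgebra ℤ π) • x
      = (MonoidAlgebra.of ℤ π g : MonoidAlgebra ℤ π)
        • (MonoidAlgebra.of ℤ π h : MonoidAlgebra ℤ π) • x
    rw [map_mul, mul_smul]

/-- The diagonal action of `x ∈ ℤ[π]` on `M ⊗_ℤ N`. -/
noncomputable def diagT (M N : Type*) [AddCommGroup M] [Module (MonoidAlgebra ℤ π) M]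
    [AddCommGroup N] [Module (MonoidAlgebra ℤ π) N] (x : MonoidAlgebra ℤ π) :
    (M ⊗[ℤ] N) →ₗ[ℤ] (M ⊗[ℤ] N) :=
  Representation.asAlgebraHom ((repOf M).tprod (repOf N)) x

variable (π)

/-- The image `gᵢ ∈ ℤ[π]` of a generator. -/
noncomputable def giA {a : ℕ} (ρ : FreeGroup (Fin a) →* π) (i : Fin a) :
    MonoidAlgebra ℤ π :=
  MonoidAlgebra.of ℤ π (ρ (FreeGroup.of i))

/-- The image `w̄ ∈ ℤ[π]` of a word `w ∈ F`. -/
noncomputable def wbar {a : ℕ} (ρ : FreeGroup (Fin a) →* π)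
    (w : FreeGroup (Fin a)) : MonoidAlgebra ℤ π :=
  MonoidAlgebra.of ℤ π (ρ w)

/-- `∂₁ : C₁ → C₀`, `x ↦ Σᵢ xᵢ(gᵢ-1)`. -/
noncomputable def d1L (a : ℕ) (ρ : FreeGroup (Fin a) →* π) :
    (Fin a → MonoidAlgebra ℤ π) →ₗ[ℤ] MonoidAlgebra ℤ π :=
  ∑ i : Fin a,
    (AddMonoidHom.mulRight (giA π ρ i - 1)).toIntLinearMap
      ∘ₗ (LinearMap.proj i : (Fin a → MonoidAlgebra ℤ π) →ₗ[ℤ] MonoidAlgebra ℤ π)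

/-- `∂₂ : C₂ → C₁`, `y ↦ Σⱼ yⱼ·α(rⱼ)`. -/
noncomputable def d2L (a b : ℕ) (ρ : FreeGroup (Fin a) →* π)
    (r : Fin b → FreeGroup (Fin a))
    (α : FreeGroup (Fin a) → (Fin a → MonoidAlgebra ℤ π)) :
    (Fin b → MonoidAlgebra ℤ π) →ₗ[ℤ] (Fin a → MonoidAlgebra ℤ π) :=
  ∑ j : Fin b,
    (LinearMap.toSpanSingleton (MonoidAlgebra ℤ π) (Fin a → MonoidAlgebra ℤ π)
        (α (r j))).toAddMonoidHom.toIntLinearMap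
      ∘ₗ (LinearMap.proj j : (Fin b → MonoidAlgebra ℤ π) →ₗ[ℤ] MonoidAlgebra ℤ π)

/-- `∂₃(h³) = Σ_k ε_k w̄_k h²_{j_k} ∈ C₂`. -/
noncomputable def bdry3 (a b c : ℕ) (ρ : FreeGroup (Fin a) →* π)
    (w : Fin c → FreeGroup (Fin a)) (jdx : Fin c → Fin b) (eps : Fin c → ℤ) :
    Fin b → MonoidAlgebra ℤ π :=
  ∑ k : Fin c, eps k • Pi.single (jdx k) (wbar π ρ (w k))

/-- `∂₃ : C₃ → C₂` (where `C₃ = ℤ[π]h³`). -/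
noncomputable def d3L (a b c : ℕ) (ρ : FreeGroup (Fin a) →* π)
    (w : Fin c → FreeGroup (Fin a)) (jdx : Fin c → Fin b) (eps : Fin c → ℤ) :
    MonoidAlgebra ℤ π →ₗ[ℤ] (Fin b → MonoidAlgebra ℤ π) :=
  (LinearMap.toSpanSingleton (MonoidAlgebra ℤ π) (Fin b → MonoidAlgebra ℤ π)
      (bdry3 π a b c ρ w jdx eps)).toAddMonoidHom.toIntLinearMap

/-- The `C₁ ⊗ C₂`-component of `Δ₀(h³)`:
`Σ_k ε_k (α(w_k) ⊗ w_k h²_{j_k})`. -/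
noncomputable def t12 (a b c : ℕ) (ρ : FreeGroup (Fin a) →* π)
    (α : FreeGroup (Fin a) → (Fin a → MonoidAlgebra ℤ π))
    (w : Fin c → FreeGroup (Fin a)) (jdx : Fin c → Fin b) (eps : Fin c → ℤ) :
    (Fin a → MonoidAlgebra ℤ π) ⊗[ℤ] (Fin b → MonoidAlgebra ℤ π) :=
  ∑ k : Fin c, eps k •
    ((α (w k)) ⊗ₜ[ℤ] (Pi.single (jdx k) (wbar π ρ (w k))))

/-- The `C₂ ⊗ C₁`-component of `Δ₀(h³)`:
`Σ_k ε_k (w_k h²_{j_k} ⊗ α(w_k)) + Σ_k δ_k w_k·(h²_{j_k} ⊗ α(r_{j_k}))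
 - Σ_{l<k} ε_l w_l h²_{j_l} ⊗ ε_k w_k α(r_{j_k})`, with `δ_k = (ε_k-1)/2`. -/
noncomputable def t21 (a b c : ℕ) (ρ : FreeGroup (Fin a) →* π)
    (r : Fin b → FreeGroup (Fin a))
    (α : FreeGroup (Fin a) → (Fin a → MonoidAlgebra ℤ π))
    (w : Fin c → FreeGroup (Fin a)) (jdx : Fin c → Fin b) (eps : Fin c → ℤ) :
    (Fin b → MonoidAlgebra ℤ π) ⊗[ℤ] (Fin a → MonoidAlgebra ℤ π) :=
  (∑ k : Fin c, eps k •
      ((Pi.single (jdx k) (wbar π ρ (w k))) ⊗ₜ[ℤ] (α (w k))))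
  + (∑ k : Fin c, ((eps k - 1) / 2) •
      (diagT _ _ (wbar π ρ (w k))
        ((Pi.single (jdx k) (1 : MonoidAlgebra ℤ π)) ⊗ₜ[ℤ] (α (r (jdx k))))))
  - (∑ k : Fin c, ∑ l ∈ Finset.Iio k,
      (eps l • Pi.single (jdx l) (wbar π ρ (w l)))
        ⊗ₜ[ℤ] (eps k • ((wbar π ρ (w k)) • α (r (jdx k)))))

/-- `Δ₀` on `C₀`, extending `h⁰ ⊗ h⁰`. -/
noncomputable def D00 (x : MonoidAlgebra ℤ π) :
    MonoidAlgebra ℤ π ⊗[ℤ] MonoidAlgebra ℤ π :=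
  diagT _ _ x ((1 : MonoidAlgebra ℤ π) ⊗ₜ[ℤ] (1 : MonoidAlgebra ℤ π))

/-- The `C₀ ⊗ C₂`-component of `Δ₀` on `C₂`. -/
noncomputable def D02 (a b : ℕ) (ρ : FreeGroup (Fin a) →* π)
    (y : Fin b → MonoidAlgebra ℤ π) :
    MonoidAlgebra ℤ π ⊗[ℤ] (Fin b → MonoidAlgebra ℤ π) :=
  ∑ j : Fin b, diagT _ _ (y j)
    ((1 : MonoidAlgebra ℤ π) ⊗ₜ[ℤ] Pi.single j (1 : MonoidAlgebra ℤ π))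

/-- The `C₁ ⊗ C₁`-component of `Δ₀` on `C₂`, extending `-γ(rⱼ)`. -/
noncomputable def D11 (a b : ℕ) (ρ : FreeGroup (Fin a) →* π)
    (r : Fin b → FreeGroup (Fin a))
    (γ : FreeGroup (Fin a) →
      (Fin a → MonoidAlgebra ℤ π) ⊗[ℤ] (Fin a → MonoidAlgebra ℤ π))
    (y : Fin b → MonoidAlgebra ℤ π) :
    (Fin a → MonoidAlgebra ℤ π) ⊗[ℤ] (Fin a → MonoidAlgebra ℤ π) :=
  ∑ j : Fin b, diagT _ _ (y j) (-(γ (r j)))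

/-- The `C₂ ⊗ C₀`-component of `Δ₀` on `C₂`, extending `h²ⱼ ⊗ h⁰`. -/
noncomputable def D20 (a b : ℕ) (ρ : FreeGroup (Fin a) →* π)
    (y : Fin b → MonoidAlgebra ℤ π) :
    (Fin b → MonoidAlgebra ℤ π) ⊗[ℤ] MonoidAlgebra ℤ π :=
  ∑ j : Fin b, diagT _ _ (y j)
    ((Pi.single j (1 : MonoidAlgebra ℤ π)) ⊗ₜ[ℤ] (1 : MonoidAlgebra ℤ π))

end stmt8

/-!
The components of `∂_⊗ Δ₀(h³) = Δ₀(∂₃ h³)` in `C₀ ⊗ C₂` and `C₂ ⊗ C₀` only need Fox's formula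
`∂₁ α(u) = ū - 1`, which also gives `∂₁ α(r_j) = 0` since every relator maps to `1 ∈ π`.

The `C₁ ⊗ C₁` component carries the content of the identity. On `ker ρ` the derivation `α` is
additive and `γ(uv) = γ(u) + γ(v) + α(u) ⊗ α(v)`, so applying `γ` to
`Π_k v_k = 1`, `v_k = w_k r_{j_k}^{ε_k} w_k⁻¹`, gives `0 = Σ_k γ(v_k) + Σ_{l<k} α(v_l) ⊗ α(v_k)`.
Expanding `α(v_k) = ε_k w_k α(r_{j_k})` and `γ(v_k)` by the cocycle rules yields exactly the
terms of `(1 ⊗ ∂₂ - ∂₂ ⊗ 1) Δ₀(h³)` and of `-Σ_k ε_k w_k · γ(r_{j_k})`.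
-/

open MonoidAlgebra

namespace stmt8

variable {π : Type*} [Group π]

lemma smul_single_one {R ι : Type*} [Semiring R] [DecidableEq ι] (j : ι) (x : R) :
    x • (Pi.single j 1 : ι → R) = Pi.single j x := by
  rw [← Pi.single_smul', smul_eq_mul, mul_one]

section DiagonalAction

variable (M N : Type*) [AddCommGroup M] [Module (MonoidAlgebra ℤ π) M]
  [AddCommGroup N] [Module (MonoidAlgebra ℤ π) N]

lemma diagT_of_tmul (g : π) (x : M) (y : N) :
    diagT M N (of ℤ π g) (x ⊗ₜ y) = (of ℤ π g • x) ⊗ₜ (of ℤ π g • y) := by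
  rw [diagT, Representation.asAlgebraHom_of, Representation.tprod_apply]
  rfl

lemma diagT_one : diagT M N (1 : MonoidAlgebra ℤ π) = LinearMap.id :=
  map_one _

lemma diagT_zero : diagT M N (0 : MonoidAlgebra ℤ π) = 0 :=
  map_zero _

lemma diagT_sum {ι : Type*} (s : Finset ι) (x : ι → MonoidAlgebra ℤ π) :
    diagT M N (∑ i ∈ s, x i) = ∑ i ∈ s, diagT M N (x i) :=
  map_sum _ _ _

lemma diagT_zsmul (n : ℤ) (x : MonoidAlgebra ℤ π) :
    diagT M N (n • x) = n • diagT M N x :=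
  map_zsmul _ _ _

end DiagonalAction

section CrossedHom

variable {F : Type*} [Group F] {M : Type*} [AddCommGroup M] [Module (MonoidAlgebra ℤ π) M]

def IsCrossedHom (ρ : F →* π) (α : F → M) : Prop :=
  ∀ u v, α (u * v) = α u + of ℤ π (ρ u) • α v

def IsTrotterGamma (ρ : F →* π) (α : F → M) (γ : F → M ⊗[ℤ] M) : Prop :=
  ∀ u v, γ (u * v) = γ u + diagT M M (of ℤ π (ρ u)) (γ v) + α u ⊗ₜ (of ℤ π (ρ u) • α v)

variable {ρ : F →* π} {α : F → M} {γ : F → M ⊗[ℤ] M}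

lemma map_ofFn_prod_eq_one {c : ℕ} (v : Fin c → F) (hv : ∀ k, ρ (v k) = 1) :
    ρ (List.ofFn v).prod = 1 := by
  rw [map_list_prod]
  exact List.prod_eq_one (by simp [hv])

namespace IsCrossedHom

variable (hα : IsCrossedHom ρ α)
include hα

lemma map_one : α 1 = 0 := by
  have h := hα 1 1
  rwa [one_mul, _root_.map_one, _root_.map_one, one_smul, left_eq_add] at h

lemma smul_map_inv (u : F) : of ℤ π (ρ u) • α u⁻¹ = -α u := by
  have h := hα u u⁻¹
  rw [mul_inv_cancel, hα.map_one] at h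
  exact eq_neg_of_add_eq_zero_right h.symm

lemma map_mul_of_ker {u : F} (hu : ρ u = 1) (v : F) : α (u * v) = α u + α v := by
  rw [hα, hu, _root_.map_one, one_smul]

lemma map_zpow_of_ker {r : F} (hr : ρ r = 1) (n : ℤ) : α (r ^ n) = n • α r := by
  have hpow (m : ℤ) : ρ (r ^ m) = 1 := by rw [map_zpow, hr, one_zpow]
  induction n using Int.induction_on with
  | zero => rw [zpow_zero, hα.map_one, zero_smul]
  | succ n ih => rw [zpow_add_one, hα.map_mul_of_ker (hpow _), ih, add_smul, one_smul]
  | pred n ih =>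
    have hinv : α r⁻¹ = -α r := eq_neg_of_add_eq_zero_right <| by
      rw [← hα.map_mul_of_ker hr, mul_inv_cancel, hα.map_one]
    rw [zpow_sub_one, hα.map_mul_of_ker (hpow _), ih, hinv, sub_smul, one_smul, sub_eq_add_neg]

lemma map_conj_of_ker {u : F} (hu : ρ u = 1) (w : F) :
    α (w * u * w⁻¹) = of ℤ π (ρ w) • α u := by
  rw [hα, hα, map_mul, hu, mul_one, hα.smul_map_inv]
  abel

lemma map_conj_zpow_of_ker {r : F} (hr : ρ r = 1) (w : F) (n : ℤ) :
    α (w * r ^ n * w⁻¹) = n • (of ℤ π (ρ w) • α r) := by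
  rw [hα.map_conj_of_ker (by rw [map_zpow, hr, one_zpow]), hα.map_zpow_of_ker hr, smul_comm]

lemma map_ofFn_prod_of_ker {c : ℕ} (v : Fin c → F) (hv : ∀ k, ρ (v k) = 1) :
    α (List.ofFn v).prod = ∑ k, α (v k) := by
  induction c with
  | zero => simp [hα.map_one]
  | succ c ih =>
    rw [List.ofFn_succ', List.prod_concat, Fin.sum_univ_castSucc,
      hα.map_mul_of_ker (map_ofFn_prod_eq_one _ fun k => hv _),
      ih _ fun k => hv _]

end IsCrossedHom

namespace IsTrotterGamma

variable (hγ : IsTrotterGamma ρ α γ)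
include hγ

lemma map_mul_of_ker {u : F} (hu : ρ u = 1) (v : F) :
    γ (u * v) = γ u + γ v + α u ⊗ₜ α v := by
  rw [hγ, hu, _root_.map_one, diagT_one, LinearMap.id_apply, one_smul]

variable (hα : IsCrossedHom ρ α)
include hα

lemma map_one : γ 1 = 0 := by
  have h := hγ 1 1
  rwa [one_mul, _root_.map_one, _root_.map_one, diagT_one, LinearMap.id_apply, hα.map_one,
    TensorProduct.zero_tmul, add_zero, left_eq_add] at h

lemma diagT_map_inv (u : F) :
    diagT M M (of ℤ π (ρ u)) (γ u⁻¹) = α u ⊗ₜ α u - γ u := by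
  have h := hγ u u⁻¹
  rw [mul_inv_cancel, hγ.map_one hα, hα.smul_map_inv, TensorProduct.tmul_neg] at h
  rw [eq_sub_iff_add_eq', ← sub_eq_zero, h]
  abel

lemma map_conj_of_ker {u : F} (hu : ρ u = 1) (w : F) :
    γ (w * u * w⁻¹) = diagT M M (of ℤ π (ρ w)) (γ u) + α w ⊗ₜ (of ℤ π (ρ w) • α u)
      - (of ℤ π (ρ w) • α u) ⊗ₜ α w := by
  rw [hγ, map_mul, hu, mul_one, hγ.diagT_map_inv hα, hα.smul_map_inv, hγ, hα,
    TensorProduct.tmul_neg, TensorProduct.add_tmul]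
  abel

lemma map_zpow_of_ker {r : F} (hr : ρ r = 1) {ε : ℤ} (hε : ε = 1 ∨ ε = -1) :
    γ (r ^ ε) = ε • γ r - ((ε - 1) / 2) • α r ⊗ₜ α r := by
  rcases hε with rfl | rfl
  · simp
  · have h := hγ.diagT_map_inv hα r
    rw [hr, _root_.map_one, diagT_one, LinearMap.id_apply] at h
    rw [zpow_neg_one, h]
    norm_num
    abel

lemma map_conj_zpow_of_ker {r : F} (hr : ρ r = 1) (w : F) {ε : ℤ} (hε : ε = 1 ∨ ε = -1) :
    γ (w * r ^ ε * w⁻¹) = ε • diagT M M (of ℤ π (ρ w)) (γ r)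
      + ε • α w ⊗ₜ (of ℤ π (ρ w) • α r) - ε • (of ℤ π (ρ w) • α r) ⊗ₜ α w
      - ((ε - 1) / 2) • (of ℤ π (ρ w) • α r) ⊗ₜ (of ℤ π (ρ w) • α r) := by
  rw [hγ.map_conj_of_ker hα (by rw [map_zpow, hr, one_zpow]), hγ.map_zpow_of_ker hα hr hε,
    hα.map_zpow_of_ker hr, map_sub, map_zsmul, map_zsmul, diagT_of_tmul, smul_comm _ ε,
    TensorProduct.tmul_smul ε, ← TensorProduct.smul_tmul' ε]
  abel

lemma map_ofFn_prod_of_ker {c : ℕ} (v : Fin c → F) (hv : ∀ k, ρ (v k) = 1) :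
    γ (List.ofFn v).prod = ∑ k, γ (v k) + ∑ k, ∑ l ∈ Finset.Iio k, α (v l) ⊗ₜ α (v k) := by
  induction c with
  | zero => simp [hγ.map_one hα]
  | succ c ih =>
    rw [List.ofFn_succ', List.prod_concat, hγ.map_mul_of_ker (map_ofFn_prod_eq_one _ fun k => hv _),
      ih _ fun k => hv _,
      hα.map_ofFn_prod_of_ker _ fun k => hv _, Fin.sum_univ_castSucc, Fin.sum_univ_castSucc,
      Fin.Iio_last_eq_map]
    simp only [Fin.sum_Iio_castSucc, Finset.sum_map, Fin.coe_castSuccEmb, TensorProduct.sum_tmul]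
    abel

end IsTrotterGamma

end CrossedHom

section PresentationComplex

variable {a b : ℕ} (ρ : FreeGroup (Fin a) →* π)

lemma d1L_apply (v : Fin a → MonoidAlgebra ℤ π) :
    d1L π a ρ v = ∑ i, v i * (giA π ρ i - 1) := by
  rw [d1L, LinearMap.sum_apply]
  rfl

lemma d1L_smul (x : MonoidAlgebra ℤ π) (v : Fin a → MonoidAlgebra ℤ π) :
    d1L π a ρ (x • v) = x * d1L π a ρ v := by
  simp only [d1L_apply, Finset.mul_sum, Pi.smul_apply, smul_eq_mul, mul_assoc]

lemma d1L_single (i : Fin a) (x : MonoidAlgebra ℤ π) :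
    d1L π a ρ (Pi.single i x) = x * (giA π ρ i - 1) := by
  rw [d1L_apply, Fintype.sum_eq_single i fun j hj => by rw [Pi.single_eq_of_ne hj, zero_mul],
    Pi.single_eq_same]

lemma d2L_single (r : Fin b → FreeGroup (Fin a))
    (α : FreeGroup (Fin a) → (Fin a → MonoidAlgebra ℤ π)) (j : Fin b) (x : MonoidAlgebra ℤ π) :
    d2L π a b ρ r α (Pi.single j x) = x • α (r j) := by
  rw [d2L, LinearMap.sum_apply,
    Fintype.sum_eq_single j fun i hi => by
      simp [Pi.single_eq_of_ne hi]]
  simp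

lemma d3L_one {c : ℕ} (w : Fin c → FreeGroup (Fin a)) (jdx : Fin c → Fin b) (eps : Fin c → ℤ) :
    d3L π a b c ρ w jdx eps 1 = bdry3 π a b c ρ w jdx eps :=
  one_smul (MonoidAlgebra ℤ π) _

variable {ρ} in
/-- Fox's fundamental formula. -/
lemma IsCrossedHom.d1L_apply {α : FreeGroup (Fin a) → (Fin a → MonoidAlgebra ℤ π)}
    (hα : IsCrossedHom ρ α) (hα1 : ∀ i, α (FreeGroup.of i) = Pi.single i 1)
    (u : FreeGroup (Fin a)) : d1L π a ρ (α u) = wbar π ρ u - 1 := by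
  induction u using FreeGroup.induction_on with
  | C1 => rw [hα.map_one, map_zero, wbar, _root_.map_one, _root_.map_one, sub_self]
  | of i => rw [hα1, d1L_single, one_mul]; rfl
  | inv_of i ih =>
    generalize FreeGroup.of i = u at ih ⊢
    have h := hα u⁻¹ u
    rw [inv_mul_cancel, hα.map_one, eq_comm, add_eq_zero_iff_eq_neg] at h
    rw [h, map_neg, d1L_smul, ih, wbar, wbar, mul_sub, mul_one, ← map_mul, ← map_mul,
      inv_mul_cancel, _root_.map_one, _root_.map_one, neg_sub]
  | mul u v ihu ihv =>
    rw [hα, map_add, d1L_smul, ihu, ihv, wbar, wbar, wbar, map_mul, map_mul]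
    noncomm_ring

variable {ρ} in
lemma IsCrossedHom.d1L_smul_eq_zero_of_ker {α : FreeGroup (Fin a) → (Fin a → MonoidAlgebra ℤ π)}
    (hα : IsCrossedHom ρ α) (hα1 : ∀ i, α (FreeGroup.of i) = Pi.single i 1)
    {u : FreeGroup (Fin a)} (hu : ρ u = 1) (x : MonoidAlgebra ℤ π) :
    d1L π a ρ (x • α u) = 0 := by
  rw [d1L_smul, hα.d1L_apply hα1, wbar, hu, _root_.map_one, sub_self, mul_zero]

variable (M N : Type*) [AddCommGroup M] [Module (MonoidAlgebra ℤ π) M]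
  [AddCommGroup N] [Module (MonoidAlgebra ℤ π) N]

lemma diagT_wbar_tmul (u : FreeGroup (Fin a)) (x : M) (y : N) :
    diagT M N (wbar π ρ u) (x ⊗ₜ y) = (wbar π ρ u • x) ⊗ₜ (wbar π ρ u • y) :=
  diagT_of_tmul M N (ρ u) x y

lemma sum_diagT_bdry3 {c : ℕ} (w : Fin c → FreeGroup (Fin a)) (jdx : Fin c → Fin b)
    (eps : Fin c → ℤ) (t : Fin b → M ⊗[ℤ] N) :
    ∑ j, diagT M N (bdry3 π a b c ρ w jdx eps j) (t j)
      = ∑ k, eps k • diagT M N (wbar π ρ (w k)) (t (jdx k)) := by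
  simp only [bdry3, Finset.sum_apply, Pi.smul_apply, diagT_sum, diagT_zsmul,
    LinearMap.sum_apply, LinearMap.smul_apply]
  rw [Finset.sum_comm]
  refine Finset.sum_congr rfl fun k _ => ?_
  rw [← Finset.smul_sum, Fintype.sum_eq_single (jdx k) fun j hj => by
    rw [Pi.single_eq_of_ne hj, diagT_zero, LinearMap.zero_apply], Pi.single_eq_same]

end PresentationComplex

section ChainMap

variable {a b c : ℕ} {ρ : FreeGroup (Fin a) →* π} {r : Fin b → FreeGroup (Fin a)}
  {α : FreeGroup (Fin a) → (Fin a → MonoidAlgebra ℤ π)}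
  {γ : FreeGroup (Fin a) → (Fin a → MonoidAlgebra ℤ π) ⊗[ℤ] (Fin a → MonoidAlgebra ℤ π)}
  (w : Fin c → FreeGroup (Fin a)) (jdx : Fin c → Fin b) (eps : Fin c → ℤ)

lemma chain_map_deg3_C0C2 (hα : IsCrossedHom ρ α)
    (hα1 : ∀ i, α (FreeGroup.of i) = Pi.single i 1) :
    TensorProduct.map LinearMap.id (d3L π a b c ρ w jdx eps)
        ((1 : MonoidAlgebra ℤ π) ⊗ₜ (1 : MonoidAlgebra ℤ π))
      + TensorProduct.map (d1L π a ρ) LinearMap.id (t12 π a b c ρ α w jdx eps)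
      = D02 π a b ρ (bdry3 π a b c ρ w jdx eps) := by
  rw [TensorProduct.map_tmul, LinearMap.id_apply, d3L_one, D02, sum_diagT_bdry3, bdry3, t12,
    TensorProduct.tmul_sum, map_sum, ← Finset.sum_add_distrib]
  refine Finset.sum_congr rfl fun k _ => ?_
  rw [diagT_wbar_tmul, smul_eq_mul, mul_one, smul_single_one, map_smul, TensorProduct.map_tmul,
    LinearMap.id_apply, hα.d1L_apply hα1, TensorProduct.tmul_smul, ← smul_add,
    ← TensorProduct.add_tmul, add_sub_cancel]

lemma chain_map_deg3_C2C0 (hα : IsCrossedHom ρ α)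
    (hα1 : ∀ i, α (FreeGroup.of i) = Pi.single i 1) (hrel : ∀ j, ρ (r j) = 1) :
    TensorProduct.map LinearMap.id (d1L π a ρ) (t21 π a b c ρ r α w jdx eps)
      + TensorProduct.map (d3L π a b c ρ w jdx eps) LinearMap.id
          ((1 : MonoidAlgebra ℤ π) ⊗ₜ (1 : MonoidAlgebra ℤ π))
      = D20 π a b ρ (bdry3 π a b c ρ w jdx eps) := by
  have hδ : ∑ k, TensorProduct.map LinearMap.id (d1L π a ρ)
      (((eps k - 1) / 2) • diagT _ _ (wbar π ρ (w k))
        ((Pi.single (jdx k) 1 : Fin b → MonoidAlgebra ℤ π) ⊗ₜ α (r (jdx k)))) = 0 :=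
    Finset.sum_eq_zero fun k _ => by
      rw [map_zsmul, diagT_wbar_tmul, TensorProduct.map_tmul,
        hα.d1L_smul_eq_zero_of_ker hα1 (hrel _), TensorProduct.tmul_zero, smul_zero]
  have hpairs : ∑ k, TensorProduct.map LinearMap.id (d1L π a ρ)
      (∑ l ∈ Finset.Iio k,
        (eps l • Pi.single (jdx l) (wbar π ρ (w l)) : Fin b → MonoidAlgebra ℤ π)
        ⊗ₜ (eps k • (wbar π ρ (w k) • α (r (jdx k))))) = 0 :=
    Finset.sum_eq_zero fun k _ => by
      rw [map_sum]
      exact Finset.sum_eq_zero fun l _ => by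
        rw [TensorProduct.map_tmul, map_zsmul (d1L π a ρ),
          hα.d1L_smul_eq_zero_of_ker hα1 (hrel _), smul_zero, TensorProduct.tmul_zero]
  rw [t21, map_sub, map_add, map_sum, map_sum, map_sum, hδ, hpairs, add_zero, sub_zero,
    TensorProduct.map_tmul, LinearMap.id_apply, d3L_one, D20, sum_diagT_bdry3, bdry3,
    TensorProduct.sum_tmul, ← Finset.sum_add_distrib]
  refine Finset.sum_congr rfl fun k _ => ?_
  rw [map_zsmul, TensorProduct.map_tmul, LinearMap.id_apply, diagT_wbar_tmul, smul_eq_mul,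
    mul_one, smul_single_one, hα.d1L_apply hα1,
    TensorProduct.smul_tmul', ← TensorProduct.tmul_add, sub_add_cancel,
    TensorProduct.smul_tmul']

lemma chain_map_deg3_C1C1 (hα : IsCrossedHom ρ α) (hγ : IsTrotterGamma ρ α γ)
    (hrel : ∀ j, ρ (r j) = 1) (heps : ∀ k, eps k = 1 ∨ eps k = -1)
    (hident : (List.ofFn fun k => w k * r (jdx k) ^ eps k * (w k)⁻¹).prod = 1) :
    TensorProduct.map LinearMap.id (d2L π a b ρ r α) (t12 π a b c ρ α w jdx eps)
      - TensorProduct.map (d2L π a b ρ r α) LinearMap.id (t21 π a b c ρ r α w jdx eps)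
      = D11 π a b ρ r γ (bdry3 π a b c ρ w jdx eps) := by
  let A (k : Fin c) : Fin a → MonoidAlgebra ℤ π := wbar π ρ (w k) • α (r (jdx k))
  have h12 : TensorProduct.map LinearMap.id (d2L π a b ρ r α) (t12 π a b c ρ α w jdx eps)
      = ∑ k, eps k • α (w k) ⊗ₜ A k := by
    simp only [t12, map_sum, map_zsmul, TensorProduct.map_tmul, LinearMap.id_apply, d2L_single, A]
  have h21 : TensorProduct.map (d2L π a b ρ r α) LinearMap.id (t21 π a b c ρ r α w jdx eps)
      = ∑ k, eps k • A k ⊗ₜ α (w k) + ∑ k, ((eps k - 1) / 2) • A k ⊗ₜ A k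
        - ∑ k, ∑ l ∈ Finset.Iio k, (eps l • A l) ⊗ₜ (eps k • A k) := by
    simp only [t21, map_sub, map_add, map_sum, map_zsmul, diagT_wbar_tmul, TensorProduct.map_tmul,
      LinearMap.id_apply, d2L_single, smul_single_one, A]
  have hD11 : D11 π a b ρ r γ (bdry3 π a b c ρ w jdx eps)
      = -∑ k, eps k • diagT _ _ (wbar π ρ (w k)) (γ (r (jdx k))) := by
    simp only [D11, sum_diagT_bdry3, map_neg, Finset.sum_neg_distrib]
  have hidentity : 0 = ∑ k, eps k • diagT _ _ (wbar π ρ (w k)) (γ (r (jdx k)))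
      + ∑ k, eps k • α (w k) ⊗ₜ A k - ∑ k, eps k • A k ⊗ₜ α (w k)
      - ∑ k, ((eps k - 1) / 2) • A k ⊗ₜ A k
      + ∑ k, ∑ l ∈ Finset.Iio k, (eps l • A l) ⊗ₜ (eps k • A k) := by
    have h := hγ.map_ofFn_prod_of_ker hα (fun k => w k * r (jdx k) ^ eps k * (w k)⁻¹)
      fun k => by rw [map_mul, map_mul, map_zpow, hrel, one_zpow, mul_one, map_inv, mul_inv_cancel]
    simp only [hident, hγ.map_one hα, hγ.map_conj_zpow_of_ker hα (hrel _) _ (heps _),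
      hα.map_conj_zpow_of_ker (hrel _), Finset.sum_add_distrib, Finset.sum_sub_distrib] at h
    exact h
  rw [h12, h21, hD11]
  linear_combination (norm := abel) -hidentity

end ChainMap

end stmt8

theorem stmt_8_general (π : Type*) [Group π] (a b c : ℕ)
    (ρ : FreeGroup (Fin a) →* π)
    (r : Fin b → FreeGroup (Fin a))
    (hrel : ∀ j : Fin b, ρ (r j) = 1)
    (α : FreeGroup (Fin a) → (Fin a → MonoidAlgebra ℤ π))
    (hα1 : ∀ i : Fin a, α (FreeGroup.of i) = Pi.single i 1)
    (hα : ∀ u v : FreeGroup (Fin a),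
      α (u * v) = α u + (MonoidAlgebra.of ℤ π (ρ u)) • α v)
    (γ : FreeGroup (Fin a) →
      (Fin a → MonoidAlgebra ℤ π) ⊗[ℤ] (Fin a → MonoidAlgebra ℤ π))
    (hγ : ∀ u v : FreeGroup (Fin a),
      γ (u * v) = γ u + stmt8.diagT _ _ (MonoidAlgebra.of ℤ π (ρ u)) (γ v)
        + (α u) ⊗ₜ[ℤ] ((MonoidAlgebra.of ℤ π (ρ u)) • α v))
    -- the identity s = Π_k w_k r_{j_k}^{ε_k} w_k⁻¹ of the presentation:
    (w : Fin c → FreeGroup (Fin a)) (jdx : Fin c → Fin b) (eps : Fin c → ℤ)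
    (heps : ∀ k : Fin c, eps k = 1 ∨ eps k = -1)
    (hident : (List.ofFn
      (fun k : Fin c => w k * (r (jdx k)) ^ (eps k) * (w k)⁻¹)).prod = 1) :
    -- ∂_⊗(Δ₀(h³)) = Δ₀(∂₃(h³)), component in C₀ ⊗ C₂:
    (TensorProduct.map LinearMap.id (stmt8.d3L π a b c ρ w jdx eps)
        ((1 : MonoidAlgebra ℤ π) ⊗ₜ[ℤ] (1 : MonoidAlgebra ℤ π))
      + TensorProduct.map (stmt8.d1L π a ρ) LinearMap.id
          (stmt8.t12 π a b c ρ α w jdx eps)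
      = stmt8.D02 π a b ρ (stmt8.bdry3 π a b c ρ w jdx eps)) ∧
    -- component in C₁ ⊗ C₁:
    (TensorProduct.map LinearMap.id (stmt8.d2L π a b ρ r α)
        (stmt8.t12 π a b c ρ α w jdx eps)
      - TensorProduct.map (stmt8.d2L π a b ρ r α) LinearMap.id
          (stmt8.t21 π a b c ρ r α w jdx eps)
      = stmt8.D11 π a b ρ r γ (stmt8.bdry3 π a b c ρ w jdx eps)) ∧
    -- component in C₂ ⊗ C₀:
    (TensorProduct.map LinearMap.id (stmt8.d1L π a ρ)
        (stmt8.t21 π a b c ρ r α w jdx eps)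
      + TensorProduct.map (stmt8.d3L π a b c ρ w jdx eps) LinearMap.id
          ((1 : MonoidAlgebra ℤ π) ⊗ₜ[ℤ] (1 : MonoidAlgebra ℤ π))
      = stmt8.D20 π a b ρ (stmt8.bdry3 π a b c ρ w jdx eps)) :=
  ⟨stmt8.chain_map_deg3_C0C2 w jdx eps hα hα1,
    stmt8.chain_map_deg3_C1C1 w jdx eps hα hγ hrel heps hident,
    stmt8.chain_map_deg3_C2C0 w jdx eps hα hα1 hrel⟩

/-- Let `π`, the presentation complex `C₂ → C₁ → C₀`, `α`,
`γ` be as in Statement 7, and let `s = Π_k w_k ρ_{j_k}^{ε_k} w_k⁻¹` be an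
identity of the presentation (so substituting the relators `r_{j_k}` for the
letters `ρ_{j_k}` yields the trivial element of the free group `F`).  Let `C₃`
have a basis element `h³` with `∂₃(h³) = Σ_k ε_k w̄_k h²_{j_k} ∈ C₂`, and let
`Δ₀(h³) = h⁰⊗h³ + h³⊗h⁰ + Σ_k ε_k (α(w_k)⊗w_kh²_{j_k} + w_kh²_{j_k}⊗α(w_k))
+ Σ_k δ_k w_k·(h²_{j_k}⊗α(r_{j_k})) - Σ_{l<k} ε_lw_lh²_{j_l}⊗ε_kw_kα(r_{j_k})`
with `δ_k = (ε_k-1)/2` and `·` the diagonal action.  Then, together with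
Trotter's formulae in degrees ≤ 2, the chain map condition holds in degree 3:
`∂_⊗(Δ₀(h³)) = Δ₀(∂₃(h³))` (components in `C₀⊗C₂`, `C₁⊗C₁`, `C₂⊗C₀`, with the
sign convention `∂_⊗(x⊗y) = x⊗∂y + (-1)^q ∂x⊗y`). -/
theorem stmt_8 (π : Type*) [Group π] (a b c : ℕ)
    (ρ : FreeGroup (Fin a) →* π)
    (r : Fin b → FreeGroup (Fin a))
    (hsurj : Function.Surjective ρ)
    (hker : ρ.ker = Subgroup.normalClosure (Set.range r))
    (hrel : ∀ j : Fin b, ρ (r j) = 1)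
    (α : FreeGroup (Fin a) → (Fin a → MonoidAlgebra ℤ π))
    (hα1 : ∀ i : Fin a, α (FreeGroup.of i) = Pi.single i 1)
    (hα : ∀ u v : FreeGroup (Fin a),
      α (u * v) = α u + (MonoidAlgebra.of ℤ π (ρ u)) • α v)
    (γ : FreeGroup (Fin a) →
      (Fin a → MonoidAlgebra ℤ π) ⊗[ℤ] (Fin a → MonoidAlgebra ℤ π))
    (hγ0 : ∀ i : Fin a, γ (FreeGroup.of i) = 0)
    (hγ : ∀ u v : FreeGroup (Fin a),
      γ (u * v) = γ u + stmt8.diagT _ _ (MonoidAlgebra.of ℤ π (ρ u)) (γ v)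
        + (α u) ⊗ₜ[ℤ] ((MonoidAlgebra.of ℤ π (ρ u)) • α v))
    -- the identity s = Π_k w_k r_{j_k}^{ε_k} w_k⁻¹ of the presentation:
    (w : Fin c → FreeGroup (Fin a)) (jdx : Fin c → Fin b) (eps : Fin c → ℤ)
    (heps : ∀ k : Fin c, eps k = 1 ∨ eps k = -1)
    (hident : (List.ofFn
      (fun k : Fin c => w k * (r (jdx k)) ^ (eps k) * (w k)⁻¹)).prod = 1) :
    -- ∂_⊗(Δ₀(h³)) = Δ₀(∂₃(h³)), component in C₀ ⊗ C₂:
    (TensorProduct.map LinearMap.id (stmt8.d3L π a b c ρ w jdx eps)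
        ((1 : MonoidAlgebra ℤ π) ⊗ₜ[ℤ] (1 : MonoidAlgebra ℤ π))
      + TensorProduct.map (stmt8.d1L π a ρ) LinearMap.id
          (stmt8.t12 π a b c ρ α w jdx eps)
      = stmt8.D02 π a b ρ (stmt8.bdry3 π a b c ρ w jdx eps)) ∧
    -- component in C₁ ⊗ C₁:
    (TensorProduct.map LinearMap.id (stmt8.d2L π a b ρ r α)
        (stmt8.t12 π a b c ρ α w jdx eps)
      - TensorProduct.map (stmt8.d2L π a b ρ r α) LinearMap.id
          (stmt8.t21 π a b c ρ r α w jdx eps)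
      = stmt8.D11 π a b ρ r γ (stmt8.bdry3 π a b c ρ w jdx eps)) ∧
    -- component in C₂ ⊗ C₀:
    (TensorProduct.map LinearMap.id (stmt8.d1L π a ρ)
        (stmt8.t21 π a b c ρ r α w jdx eps)
      + TensorProduct.map (stmt8.d3L π a b c ρ w jdx eps) LinearMap.id
          ((1 : MonoidAlgebra ℤ π) ⊗ₜ[ℤ] (1 : MonoidAlgebra ℤ π))
      = stmt8.D20 π a b ρ (stmt8.bdry3 π a b c ρ w jdx eps)) :=
  stmt_8_general π a b c ρ r hrel α hα1 hα γ hγ w jdx eps heps hident
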